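/- Lemma S2 (factorized form of the joint variational density, SDE formulation). For every j ∈ {1,…,J} and all x_0,…,x_j ∈ ℝ, f_M ∈ ℝ^M, the pointwise identity q^Δ(f_M) ∏_{j'=0}^{j−1} p^Δ(x_{j'+1}|x_{j'},f_M) = q^Δ(f_M|x_j,…,x_0) ∏_{j'=1}^{j} q^Δ(x_{j'}|x_{j'−1},…,x_0) holds, where q^Δ(x_{j'}|x_{j'−1},…,x_0) = N(x_{j'} | μ̃^Δ_{j'−1} + S̃^Δ_{j'−1,0:j'−2}(S̃^Δ_{0:j'−2,0:j'−2})^{−1}(x_{1:j'−1} − μ̃^Δ_{0:j'−2}), S̃^Δ_{j'−1,j'−1} − S̃^Δ_{j'−1,0:j'−2}(S̃^Δ_{0:j'−2,0:j'−2})^{−1}S̃^Δ_{0:j'−2,j'−1}), and q^Δ(f_M|x_j,…,x_0) = N_M(f_M | μ̂^j_M, Σ̂^j_M) with μ̂^j_M = m^Δ_M + RΔt·S^Δ_M (K^Δ_MM)^{−1} (K^Δ_{0:j−1,M})ᵀ (S̃^Δ_{0:j−1,0:j−1})^{−1} (x_{1:j} − μ̃^Δ_{0:j−1}) and Σ̂^j_M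 = S^Δ_M − (RΔt)²·S^Δ_M (K^Δ_MM)^{−1} (K^Δ_{0:j−1,M})ᵀ (S̃^Δ_{0:j−1,0:j−1})^{−1} K^Δ_{0:j−1,M} (K^Δ_MM)^{−1} S^Δ_M; here K^Δ_{0:j−1,M} ∈ ℝ^{j×M} is the matrix whose a-th row is K^Δ_{x_a M}. -/

import Mathlib

open MeasureTheory Matrix

/-- Scalar Gaussian density `N(x | μ, σ²)`. -/
noncomputable def gauss (x μ σ2 : ℝ) : ℝ :=
  (Real.sqrt (2 * Real.pi * σ2))⁻¹ * Real.exp (-(x - μ) ^ 2 / (2 * σ2))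

/-- Multivariate Gaussian density `N_M(v | m, S)` on `ℝ^M`. -/
noncomputable def gaussM {M : ℕ} (v m : Fin M → ℝ) (S : Matrix (Fin M) (Fin M) ℝ) : ℝ :=
  (Real.sqrt ((2 * Real.pi) ^ M * S.det))⁻¹ *
    Real.exp (-(1 / 2) * ((v - m) ⬝ᵥ (S⁻¹ *ᵥ (v - m))))

/-- The state path `x_0, …, x_{j-1}, x_j, x_j, …` built from `xs : Fin j → ℝ`
(the variables of integration `x_0, …, x_{j-1}`) and the final value `xj = x_j`. -/
def path (j : ℕ) (xs : Fin j → ℝ) (xj : ℝ) : ℕ → ℝ :=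
  fun i => if h : i < j then xs ⟨i, h⟩ else xj

/-- SDE-discretization data: kernel `k^Δ`, inducing inputs `z`, the time interval `Δt`,
the integer resolution `R`, the diffusion parameter `Q^Δ`, and the
variational parameters `mM, SM` (inducing outputs) and `m0, S0` (initial state). -/
structure SDE (M : ℕ) where
  k : ℝ → ℝ → ℝ
  z : Fin M → ℝ
  dt : ℝ
  R : ℕ
  Q : ℝ
  mM : Fin M → ℝ
  SM : Matrix (Fin M) (Fin M) ℝ
  m0 : ℝ
  S0 : ℝ

namespace SDE

variable {M : ℕ} (g : SDE M)

/-- The step size `R·Δt`. -/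
noncomputable def rho : ℝ := (g.R : ℝ) * g.dt

/-- `K^Δ_MM`, the kernel matrix of the inducing inputs. -/
noncomputable def KMM : Matrix (Fin M) (Fin M) ℝ :=
  Matrix.of fun a b => g.k (g.z a) (g.z b)

/-- `K^Δ_{xM}`, the vector of kernel evaluations between a state `x` and the inducing inputs. -/
noncomputable def KxM (x : ℝ) : Fin M → ℝ := fun a => g.k x (g.z a)

/-- Euler–Maruyama transition variance
`RΔt·Q^Δ + (RΔt)²(K^Δ_xx − K^Δ_{xM} (K^Δ_MM)⁻¹ (K^Δ_{xM})ᵀ)`. -/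
noncomputable def transVar (x : ℝ) : ℝ :=
  g.rho * g.Q + g.rho ^ 2 * (g.k x x - g.KxM x ⬝ᵥ (g.KMM⁻¹ *ᵥ g.KxM x))

/-- Euler–Maruyama transition density `p^Δ(x' | x, f_M)`. -/
noncomputable def trans (x' x : ℝ) (f : Fin M → ℝ) : ℝ :=
  gauss x' (x + g.rho * (g.KxM x ⬝ᵥ (g.KMM⁻¹ *ᵥ f))) (g.transVar x)

/-- `μ̃^Δ(x) = x + RΔt·K^Δ_{xM} (K^Δ_MM)⁻¹ m^Δ_M`. -/
noncomputable def muT (x : ℝ) : ℝ := x + g.rho * (g.KxM x ⬝ᵥ (g.KMM⁻¹ *ᵥ g.mM))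

/-- `S̃^Δ_{a,b}` as a function of the state path. -/
noncomputable def Stl (x : ℕ → ℝ) (a b : ℕ) : ℝ :=
  g.rho ^ 2 * (g.KxM (x a) ⬝ᵥ (g.KMM⁻¹ *ᵥ (g.SM *ᵥ (g.KMM⁻¹ *ᵥ g.KxM (x b))))) +
    if a = b then g.transVar (x a) else 0

/-- The block matrix `S̃^Δ_{0:s-1,0:s-1}` of size `s`. -/
noncomputable def blockS (x : ℕ → ℝ) (s : ℕ) : Matrix (Fin s) (Fin s) ℝ :=
  Matrix.of fun a b => g.Stl x a b

/-- Conditional mean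
`μ̂_{s+1} = μ̃^Δ_s + S̃^Δ_{s,0:s-1} (S̃^Δ_{0:s-1,0:s-1})⁻¹ (x_{1:s} − μ̃^Δ_{0:s-1})`
(for `s = 0` the correction term is empty). -/
noncomputable def condMean (x : ℕ → ℝ) (s : ℕ) : ℝ :=
  g.muT (x s) +
    (fun i : Fin s => g.Stl x s i) ⬝ᵥ
      ((g.blockS x s)⁻¹ *ᵥ fun i : Fin s => x ((i : ℕ) + 1) - g.muT (x i))

/-- Conditional variance
`Σ̂_{s+1} = S̃^Δ_{s,s} − S̃^Δ_{s,0:s-1} (S̃^Δ_{0:s-1,0:s-1})⁻¹ S̃^Δ_{0:s-1,s}`. -/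
noncomputable def condVar (x : ℕ → ℝ) (s : ℕ) : ℝ :=
  g.Stl x s s -
    (fun i : Fin s => g.Stl x s i) ⬝ᵥ ((g.blockS x s)⁻¹ *ᵥ fun i : Fin s => g.Stl x i s)

/-- The matrix `K^Δ_{0:j-1,M} ∈ ℝ^{j×M}` whose `a`-th row is `K^Δ_{x_a M}`. -/
noncomputable def Pmat (x : ℕ → ℝ) (j : ℕ) : Matrix (Fin j) (Fin M) ℝ :=
  Matrix.of fun a i => g.k (x a) (g.z i)

/-- The residual vector `x_{1:j} − μ̃^Δ_{0:j-1}`. -/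
noncomputable def resid (x : ℕ → ℝ) (j : ℕ) : Fin j → ℝ :=
  fun i => x ((i : ℕ) + 1) - g.muT (x i)

/-- Conditional mean of the inducing outputs given `x_0, …, x_j`:
`μ̂^j_M = m^Δ_M + RΔt·S^Δ_M (K^Δ_MM)⁻¹ (K^Δ_{0:j-1,M})ᵀ (S̃^Δ_{0:j-1,0:j-1})⁻¹ (x_{1:j} − μ̃^Δ_{0:j-1})`. -/
noncomputable def muHatM (x : ℕ → ℝ) (j : ℕ) : Fin M → ℝ :=
  g.mM + g.rho • ((g.SM * g.KMM⁻¹ * (g.Pmat x j)ᵀ) *ᵥ ((g.blockS x j)⁻¹ *ᵥ g.resid x j))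

/-- Conditional covariance of the inducing outputs given `x_0, …, x_j`:
`Σ̂^j_M = S^Δ_M − (RΔt)²·S^Δ_M (K^Δ_MM)⁻¹ (K^Δ_{0:j-1,M})ᵀ (S̃^Δ_{0:j-1,0:j-1})⁻¹ K^Δ_{0:j-1,M} (K^Δ_MM)⁻¹ S^Δ_M`. -/
noncomputable def SigHatM (x : ℕ → ℝ) (j : ℕ) : Matrix (Fin M) (Fin M) ℝ :=
  g.SM - g.rho ^ 2 •
    (g.SM * g.KMM⁻¹ * (g.Pmat x j)ᵀ * (g.blockS x j)⁻¹ * g.Pmat x j * g.KMM⁻¹ * g.SM)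

end SDE


/-! ### Auxiliary lemmas for the proof of Lemma S2 -/

set_option linter.unusedSectionVars false
set_option linter.unnecessarySeqFocus false
set_option maxHeartbeats 1600000

namespace SDEAux
open Matrix

lemma dot_symm {n : Type*} [Fintype n] (A : Matrix n n ℝ) (hA : Aᵀ = A) (u v : n → ℝ) :
    u ⬝ᵥ (A *ᵥ v) = v ⬝ᵥ (A *ᵥ u) := by
  rw [Matrix.dotProduct_mulVec, ← Matrix.mulVec_transpose, hA, dotProduct_comm]

lemma inv_symm {n : Type*} [Fintype n] [DecidableEq n] (A : Matrix n n ℝ) (hA : Aᵀ = A) :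
    (A⁻¹)ᵀ = A⁻¹ := by
  rw [Matrix.transpose_nonsing_inv, hA]

lemma dot_mulVec_entry {ι n : Type*} [Fintype n] (P : Matrix ι n ℝ) (B : Matrix n n ℝ) (a b : ι) :
    (fun i => P a i) ⬝ᵥ (B *ᵥ fun i => P b i) = (P * B * Pᵀ) a b := by
  simp only [Matrix.mul_apply, Matrix.mulVec, dotProduct, Matrix.transpose_apply,
    Finset.sum_mul, Finset.mul_sum]
  rw [Finset.sum_comm]
  apply Finset.sum_congr rfl; intro k _; apply Finset.sum_congr rfl; intro l _; ring

lemma oneByOne (d : Matrix (Fin 1) (Fin 1) ℝ) : d = d 0 0 • (1 : Matrix (Fin 1) (Fin 1) ℝ) := by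
  ext i j
  fin_cases i <;> fin_cases j <;> simp

lemma entry_mul_mul {n : Type*} [Fintype n] (R : Matrix (Fin 1) n ℝ) (B : Matrix n n ℝ)
    (C : Matrix n (Fin 1) ℝ) :
    (R * B * C) 0 0 = (fun i => R 0 i) ⬝ᵥ (B *ᵥ fun i => C i 0) := by
  simp only [Matrix.mul_apply, Matrix.mulVec, dotProduct, Finset.sum_mul, Finset.mul_sum]
  rw [Finset.sum_comm]
  apply Finset.sum_congr rfl; intro k _; apply Finset.sum_congr rfl; intro l _; ring

lemma inv_submatrix_equiv {m' n' : Type*} [Fintype m'] [Fintype n'] [DecidableEq m']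
    [DecidableEq n'] (A : Matrix m' m' ℝ) (e : n' ≃ m') (hA : IsUnit A.det) :
    (A.submatrix e e)⁻¹ = A⁻¹.submatrix e e := by
  apply Matrix.inv_eq_right_inv
  rw [Matrix.submatrix_mul_equiv, Matrix.mul_nonsing_inv _ hA, Matrix.submatrix_one_equiv]

lemma dot_comp_equiv {ι κ : Type*} [Fintype ι] [Fintype κ] (e : ι ≃ κ) (w : κ → ℝ) (z : ι → ℝ) :
    w ⬝ᵥ (z ∘ e.symm) = (w ∘ e) ⬝ᵥ z := by
  unfold dotProduct
  exact Fintype.sum_equiv e.symm _ _ (by intro a; simp)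

/-- Explicit inverse of a bordered matrix. -/
lemma blockInv {N : ℕ} (P : Matrix (Fin N) (Fin N) ℝ) (C : Matrix (Fin N) (Fin 1) ℝ)
    (R : Matrix (Fin 1) (Fin N) ℝ) (d : Matrix (Fin 1) (Fin 1) ℝ)
    (hP : IsUnit P.det) {s : ℝ} (hs : s ≠ 0)
    (hsv : d 0 0 - (R * P⁻¹ * C) 0 0 = s) :
    (fromBlocks P C R d)⁻¹ =
      fromBlocks (P⁻¹ + s⁻¹ • (P⁻¹ * C * (R * P⁻¹))) (-(s⁻¹ • (P⁻¹ * C)))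
        (-(s⁻¹ • (R * P⁻¹))) (s⁻¹ • (1 : Matrix (Fin 1) (Fin 1) ℝ)) := by
  have hPP : P * P⁻¹ = 1 := Matrix.mul_nonsing_inv P hP
  have hschur : d - R * P⁻¹ * C = s • (1 : Matrix (Fin 1) (Fin 1) ℝ) := by
    rw [oneByOne (d - R * P⁻¹ * C)]
    simp [hsv]
  have hRPC : R * P⁻¹ * C = d - s • (1 : Matrix (Fin 1) (Fin 1) ℝ) := by
    rw [← hschur, sub_sub_cancel]
  apply Matrix.inv_eq_right_inv
  rw [fromBlocks_multiply]
  have e11 : P * (P⁻¹ + s⁻¹ • (P⁻¹ * C * (R * P⁻¹))) + C * -(s⁻¹ • (R * P⁻¹)) = 1 := by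
    rw [Matrix.mul_add, Matrix.mul_smul, Matrix.mul_neg, Matrix.mul_smul]
    rw [show P * (P⁻¹ * C * (R * P⁻¹)) = P * P⁻¹ * C * (R * P⁻¹) by
      simp only [Matrix.mul_assoc]]
    rw [hPP, Matrix.one_mul]
    abel
  have e12 : P * -(s⁻¹ • (P⁻¹ * C)) + C * (s⁻¹ • (1 : Matrix (Fin 1) (Fin 1) ℝ)) = 0 := by
    rw [Matrix.mul_neg, Matrix.mul_smul, Matrix.mul_smul, ← Matrix.mul_assoc, hPP,
      Matrix.one_mul, Matrix.mul_one]
    abel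
  have e21 : R * (P⁻¹ + s⁻¹ • (P⁻¹ * C * (R * P⁻¹))) + d * -(s⁻¹ • (R * P⁻¹)) = 0 := by
    rw [Matrix.mul_add, Matrix.mul_smul, Matrix.mul_neg, Matrix.mul_smul]
    rw [show R * (P⁻¹ * C * (R * P⁻¹)) = (R * P⁻¹ * C) * (R * P⁻¹) by
      simp only [Matrix.mul_assoc]]
    rw [hRPC]
    rw [Matrix.sub_mul, Matrix.smul_mul, Matrix.one_mul, smul_sub, smul_smul,
      inv_mul_cancel₀ hs, one_smul]
    abel
  have e22 : R * -(s⁻¹ • (P⁻¹ * C)) + d * (s⁻¹ • (1 : Matrix (Fin 1) (Fin 1) ℝ)) = 1 := by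
    rw [Matrix.mul_neg, Matrix.mul_smul, Matrix.mul_smul, ← Matrix.mul_assoc, Matrix.mul_one]
    rw [show R * P⁻¹ * C = d - s • (1 : Matrix (Fin 1) (Fin 1) ℝ) from hRPC]
    rw [smul_sub, smul_smul, inv_mul_cancel₀ hs, one_smul]
    abel
  rw [e11, e12, e21, e22, fromBlocks_one]

/-- Quadratic form of the inverse of a bordered symmetric matrix. -/
lemma bordered_quad {N : ℕ} (P : Matrix (Fin N) (Fin N) ℝ) (C : Matrix (Fin N) (Fin 1) ℝ)
    (R : Matrix (Fin 1) (Fin N) ℝ) (d : Matrix (Fin 1) (Fin 1) ℝ)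
    (hP : IsUnit P.det) (hPsymm : Pᵀ = P) (hC : C = Rᵀ) {s : ℝ} (hs : s ≠ 0)
    (hsv : d 0 0 - (R * P⁻¹ * C) 0 0 = s) (u : Fin N → ℝ) (b : ℝ) :
    Sum.elim u (fun _ => b) ⬝ᵥ ((fromBlocks P C R d)⁻¹ *ᵥ Sum.elim u (fun _ => b)) =
      u ⬝ᵥ (P⁻¹ *ᵥ u) + (b - (fun i => R 0 i) ⬝ᵥ (P⁻¹ *ᵥ u)) ^ 2 / s := by
  have hPinv : (P⁻¹)ᵀ = P⁻¹ := by rw [Matrix.transpose_nonsing_inv, hPsymm]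
  rw [blockInv P C R d hP hs hsv]
  set α := (fun i => R 0 i) ⬝ᵥ (P⁻¹ *ᵥ u) with hα
  have hcol : (fun i => C i 0) = fun i => R 0 i := by
    funext i; rw [hC]; rfl
  rw [fromBlocks_mulVec, sumElim_dotProduct_sumElim]
  simp only [Sum.elim_comp_inl, Sum.elim_comp_inr]
  have hRu : (R * P⁻¹) *ᵥ u = fun _ : Fin 1 => α := by
    funext i
    have hi : i = 0 := Subsingleton.elim _ _
    subst hi
    rw [← Matrix.mulVec_mulVec]
    simp [Matrix.mulVec, hα, dotProduct]
  have hCb : ∀ c : ℝ, C *ᵥ (fun _ : Fin 1 => c) = c • fun i => C i 0 := by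
    intro c
    funext i
    simp [Matrix.mulVec, dotProduct, Fin.sum_univ_one, mul_comm]
  have hdotc : u ⬝ᵥ (P⁻¹ *ᵥ fun i => C i 0) = α := by
    rw [hcol, hα]
    exact dot_symm P⁻¹ hPinv u _
  have t1 : (P⁻¹ + s⁻¹ • (P⁻¹ * C * (R * P⁻¹))) *ᵥ u
      = P⁻¹ *ᵥ u + (s⁻¹ * α) • (P⁻¹ *ᵥ fun i => C i 0) := by
    rw [Matrix.add_mulVec, Matrix.smul_mulVec]
    congr 1
    rw [← Matrix.mulVec_mulVec, ← Matrix.mulVec_mulVec, hRu, hCb, Matrix.mulVec_smul,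
      smul_smul]
  have t2 : (-(s⁻¹ • (P⁻¹ * C))) *ᵥ (fun _ : Fin 1 => b)
      = -((s⁻¹ * b) • (P⁻¹ *ᵥ fun i => C i 0)) := by
    rw [Matrix.neg_mulVec, Matrix.smul_mulVec, ← Matrix.mulVec_mulVec, hCb,
      Matrix.mulVec_smul, smul_smul]
  have t3 : (-(s⁻¹ • (R * P⁻¹))) *ᵥ u = fun _ : Fin 1 => -(s⁻¹ * α) := by
    rw [Matrix.neg_mulVec, Matrix.smul_mulVec, hRu]
    funext i; simp
  have t4 : ((s⁻¹ • (1 : Matrix (Fin 1) (Fin 1) ℝ))) *ᵥ (fun _ : Fin 1 => b)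
      = fun _ : Fin 1 => s⁻¹ * b := by
    rw [Matrix.smul_mulVec, Matrix.one_mulVec]
    funext i; simp
  rw [t1, t2, t3, t4]
  rw [dotProduct_add, dotProduct_neg, dotProduct_smul,
    dotProduct_add, dotProduct_smul, hdotc]
  have hb : (fun _ : Fin 1 => b) ⬝ᵥ ((fun _ : Fin 1 => -(s⁻¹ * α)) + fun _ : Fin 1 => s⁻¹ * b)
      = b * (s⁻¹ * b) - b * (s⁻¹ * α) := by
    simp [dotProduct]; ring
  rw [hb]
  simp only [smul_eq_mul]
  field_simp
  ring

/-- Determinant of a bordered matrix. -/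
lemma bordered_det {N : ℕ} (P : Matrix (Fin N) (Fin N) ℝ) (C : Matrix (Fin N) (Fin 1) ℝ)
    (R : Matrix (Fin 1) (Fin N) ℝ) (d : Matrix (Fin 1) (Fin 1) ℝ)
    (hP : IsUnit P.det) {s : ℝ}
    (hsv : d 0 0 - (R * P⁻¹ * C) 0 0 = s) :
    (fromBlocks P C R d).det = P.det * s := by
  have : Invertible P := P.invertibleOfIsUnitDet hP
  rw [Matrix.det_fromBlocks₁₁]
  congr 1
  rw [Matrix.det_fin_one]
  have h2 : ⅟P = P⁻¹ := Matrix.invOf_eq_nonsing_inv P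
  rw [h2]
  simpa using hsv


section Woodbury

variable {mI nI : Type*} [Fintype mI] [Fintype nI] [DecidableEq mI] [DecidableEq nI]

/-- Key product: `(S⁻¹ + AᵀD⁻¹A)(SAᵀ) = AᵀD⁻¹(ASAᵀ + D)`. -/
lemma wood_key (S : Matrix mI mI ℝ) (A : Matrix nI mI ℝ) (D : Matrix nI nI ℝ)
    (hS : IsUnit S.det) (hD : IsUnit D.det) :
    (S⁻¹ + Aᵀ * D⁻¹ * A) * (S * Aᵀ) = Aᵀ * D⁻¹ * (A * S * Aᵀ + D) := by
  rw [Matrix.add_mul, Matrix.mul_add]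
  rw [Matrix.nonsing_inv_mul_cancel_left S Aᵀ hS]
  rw [Matrix.nonsing_inv_mul_cancel_right D Aᵀ hD]
  rw [add_comm (Aᵀ * D⁻¹ * (A * S * Aᵀ)) Aᵀ]
  congr 1
  simp only [Matrix.mul_assoc]

/-- Woodbury-type identity for the posterior covariance. -/
lemma woodbury (S : Matrix mI mI ℝ) (A : Matrix nI mI ℝ) (D : Matrix nI nI ℝ)
    (hS : IsUnit S.det) (hD : IsUnit D.det)
    (hT : IsUnit (A * S * Aᵀ + D).det) :
    (S - S * Aᵀ * (A * S * Aᵀ + D)⁻¹ * (A * S))⁻¹ = S⁻¹ + Aᵀ * D⁻¹ * A := by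
  apply Matrix.inv_eq_left_inv
  set T := A * S * Aᵀ + D with hTdef
  set N := S⁻¹ + Aᵀ * D⁻¹ * A with hNdef
  have hNS : N * S = 1 + Aᵀ * D⁻¹ * (A * S) := by
    rw [hNdef, Matrix.add_mul, Matrix.nonsing_inv_mul S hS]
    simp only [Matrix.mul_assoc]
  have hcross : N * (S * Aᵀ * T⁻¹ * (A * S)) = Aᵀ * D⁻¹ * (A * S) := by
    have h1 : N * (S * Aᵀ * T⁻¹ * (A * S)) = (N * (S * Aᵀ)) * (T⁻¹ * (A * S)) := by
      simp only [Matrix.mul_assoc]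
    rw [h1, wood_key S A D hS hD, ← hTdef]
    calc Aᵀ * D⁻¹ * T * (T⁻¹ * (A * S)) = Aᵀ * D⁻¹ * (T * (T⁻¹ * (A * S))) := by
          simp only [Matrix.mul_assoc]
      _ = Aᵀ * D⁻¹ * (A * S) := by rw [Matrix.mul_nonsing_inv_cancel_left T (A * S) hT]
  rw [Matrix.mul_sub, hNS, hcross]
  abel

/-- `Σ̂⁻¹ (S Aᵀ T⁻¹) = Aᵀ D⁻¹`. -/
lemma wood_cross (S : Matrix mI mI ℝ) (A : Matrix nI mI ℝ) (D : Matrix nI nI ℝ)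
    (hS : IsUnit S.det) (hD : IsUnit D.det)
    (hT : IsUnit (A * S * Aᵀ + D).det) :
    (S - S * Aᵀ * (A * S * Aᵀ + D)⁻¹ * (A * S))⁻¹ * (S * Aᵀ * (A * S * Aᵀ + D)⁻¹)
      = Aᵀ * D⁻¹ := by
  rw [woodbury S A D hS hD hT]
  set T := A * S * Aᵀ + D with hTdef
  have h1 : (S⁻¹ + Aᵀ * D⁻¹ * A) * (S * Aᵀ * T⁻¹)
      = ((S⁻¹ + Aᵀ * D⁻¹ * A) * (S * Aᵀ)) * T⁻¹ := by
    simp only [Matrix.mul_assoc]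
  rw [h1, wood_key S A D hS hD, ← hTdef, Matrix.mul_nonsing_inv_cancel_right T (Aᵀ * D⁻¹) hT]

/-- `T⁻¹ (A S) (Aᵀ D⁻¹) + T⁻¹ = D⁻¹`. -/
lemma wood_third (S : Matrix mI mI ℝ) (A : Matrix nI mI ℝ) (D : Matrix nI nI ℝ)
    (hD : IsUnit D.det)
    (hT : IsUnit (A * S * Aᵀ + D).det) :
    (A * S * Aᵀ + D)⁻¹ * (A * S) * (Aᵀ * D⁻¹) + (A * S * Aᵀ + D)⁻¹ = D⁻¹ := by
  set T := A * S * Aᵀ + D with hTdef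
  have h1 : T⁻¹ * (A * S) * (Aᵀ * D⁻¹) = T⁻¹ * (A * S * Aᵀ) * D⁻¹ := by
    simp only [Matrix.mul_assoc]
  rw [h1]
  have h2 : A * S * Aᵀ = T - D := by rw [hTdef]; abel
  rw [h2, Matrix.mul_sub, Matrix.sub_mul]
  rw [Matrix.nonsing_inv_mul T hT, Matrix.one_mul]
  have h3 : T⁻¹ * D * D⁻¹ = T⁻¹ := Matrix.mul_nonsing_inv_cancel_right D T⁻¹ hD
  rw [h3]
  abel

/-- Determinant identity `det S · det D = det Σ̂ · det T`. -/
lemma wood_det (S : Matrix mI mI ℝ) (A : Matrix nI mI ℝ) (D : Matrix nI nI ℝ)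
    (hS : IsUnit S.det)
    (hT : IsUnit (A * S * Aᵀ + D).det) :
    S.det * D.det = (S - S * Aᵀ * (A * S * Aᵀ + D)⁻¹ * (A * S)).det
      * (A * S * Aᵀ + D).det := by
  set T := A * S * Aᵀ + D with hTdef
  have iS : Invertible S := S.invertibleOfIsUnitDet hS
  have iT : Invertible T := T.invertibleOfIsUnitDet hT
  have h1 : (fromBlocks S (S * Aᵀ) (A * S) T).det = S.det * D.det := by
    rw [Matrix.det_fromBlocks₁₁]
    congr 1
    have hinv : ⅟S = S⁻¹ := Matrix.invOf_eq_nonsing_inv S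
    rw [hinv]
    have : A * S * S⁻¹ * (S * Aᵀ) = A * S * Aᵀ := by
      rw [Matrix.mul_nonsing_inv_cancel_right S A hS]
      simp only [Matrix.mul_assoc]
    rw [this, hTdef]
    abel_nf
  have h2 : (fromBlocks S (S * Aᵀ) (A * S) T).det
      = T.det * (S - S * Aᵀ * T⁻¹ * (A * S)).det := by
    rw [Matrix.det_fromBlocks₂₂]
    congr 2
    have hinv : ⅟T = T⁻¹ := Matrix.invOf_eq_nonsing_inv T
    rw [hinv]
  rw [h1.symm, h2]
  ring

end Woodbury

section LemA

variable {mI nI : Type*} [Fintype mI] [Fintype nI] [DecidableEq mI] [DecidableEq nI]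

lemma dot_transpose (A : Matrix nI mI ℝ) (v : mI → ℝ) (w : nI → ℝ) :
    v ⬝ᵥ (Aᵀ *ᵥ w) = (A *ᵥ v) ⬝ᵥ w := by
  rw [Matrix.dotProduct_mulVec, Matrix.vecMul_transpose]

/-- The quadratic-form identity behind Gaussian conjugacy. -/
lemma lemA_quad (S : Matrix mI mI ℝ) (A : Matrix nI mI ℝ) (D : Matrix nI nI ℝ)
    (hS : IsUnit S.det) (hD : IsUnit D.det) (hT : IsUnit (A * S * Aᵀ + D).det)
    (hSsym : Sᵀ = S) (hDsym : Dᵀ = D) (gv : mI → ℝ) (r : nI → ℝ) :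
    gv ⬝ᵥ (S⁻¹ *ᵥ gv) + (r - A *ᵥ gv) ⬝ᵥ (D⁻¹ *ᵥ (r - A *ᵥ gv))
      = (gv - (S * Aᵀ * (A * S * Aᵀ + D)⁻¹) *ᵥ r) ⬝ᵥ
          ((S - S * Aᵀ * (A * S * Aᵀ + D)⁻¹ * (A * S))⁻¹ *ᵥ
            (gv - (S * Aᵀ * (A * S * Aᵀ + D)⁻¹) *ᵥ r))
        + r ⬝ᵥ ((A * S * Aᵀ + D)⁻¹ *ᵥ r) := by
  set T := A * S * Aᵀ + D with hTdef
  set Sh := S - S * Aᵀ * T⁻¹ * (A * S) with hShdef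
  set X := S * Aᵀ * T⁻¹ with hXdef
  set u := X *ᵥ r with hudef
  have hTsym : Tᵀ = T := by
    rw [hTdef, Matrix.transpose_add, hDsym]
    congr 1
    simp only [Matrix.transpose_mul, Matrix.transpose_transpose, hSsym]
    simp only [Matrix.mul_assoc]
  have hTi : (T⁻¹)ᵀ = T⁻¹ := inv_symm T hTsym
  have hDi : (D⁻¹)ᵀ = D⁻¹ := inv_symm D hDsym
  have hXt : Xᵀ = T⁻¹ * (A * S) := by
    simp only [hXdef, Matrix.transpose_mul, Matrix.transpose_transpose, hSsym, hTi,
      Matrix.mul_assoc]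
  have hShsym : Shᵀ = Sh := by
    rw [hShdef, Matrix.transpose_sub, hSsym]
    congr 1
    rw [Matrix.transpose_mul, hXt]
    simp only [Matrix.transpose_mul, Matrix.transpose_transpose, hSsym, hXdef]
    simp only [Matrix.mul_assoc]
  have hNi : ((Sh⁻¹)ᵀ) = Sh⁻¹ := inv_symm Sh hShsym
  have e1 : Sh⁻¹ = S⁻¹ + Aᵀ * D⁻¹ * A := woodbury S A D hS hD hT
  have e2 : Sh⁻¹ * X = Aᵀ * D⁻¹ := wood_cross S A D hS hD hT
  have e3 : T⁻¹ * (A * S) * (Aᵀ * D⁻¹) = D⁻¹ - T⁻¹ :=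
    eq_sub_of_add_eq (wood_third S A D hD hT)
  have e_gg : gv ⬝ᵥ (Sh⁻¹ *ᵥ gv)
      = gv ⬝ᵥ (S⁻¹ *ᵥ gv) + (A *ᵥ gv) ⬝ᵥ (D⁻¹ *ᵥ (A *ᵥ gv)) := by
    rw [e1, Matrix.add_mulVec, dotProduct_add]
    congr 1
    rw [← Matrix.mulVec_mulVec, ← Matrix.mulVec_mulVec, dot_transpose]
  have e_gu : gv ⬝ᵥ (Sh⁻¹ *ᵥ u) = (A *ᵥ gv) ⬝ᵥ (D⁻¹ *ᵥ r) := by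
    rw [hudef, Matrix.mulVec_mulVec, e2, ← Matrix.mulVec_mulVec, dot_transpose]
  have e_uu : u ⬝ᵥ (Sh⁻¹ *ᵥ u) = r ⬝ᵥ (D⁻¹ *ᵥ r) - r ⬝ᵥ (T⁻¹ *ᵥ r) := by
    rw [hudef, Matrix.mulVec_mulVec, e2]
    rw [← dot_transpose X r ((Aᵀ * D⁻¹) *ᵥ r)]
    rw [Matrix.mulVec_mulVec, hXt, e3, Matrix.sub_mulVec, dotProduct_sub]
  have expandL : (r - A *ᵥ gv) ⬝ᵥ (D⁻¹ *ᵥ (r - A *ᵥ gv))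
      = r ⬝ᵥ (D⁻¹ *ᵥ r) - 2 * ((A *ᵥ gv) ⬝ᵥ (D⁻¹ *ᵥ r))
        + (A *ᵥ gv) ⬝ᵥ (D⁻¹ *ᵥ (A *ᵥ gv)) := by
    rw [Matrix.mulVec_sub, sub_dotProduct, dotProduct_sub, dotProduct_sub]
    rw [dot_symm D⁻¹ hDi r (A *ᵥ gv)]
    ring
  have expandR : (gv - u) ⬝ᵥ (Sh⁻¹ *ᵥ (gv - u))
      = gv ⬝ᵥ (Sh⁻¹ *ᵥ gv) - 2 * (gv ⬝ᵥ (Sh⁻¹ *ᵥ u)) + u ⬝ᵥ (Sh⁻¹ *ᵥ u) := by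
    rw [Matrix.mulVec_sub, sub_dotProduct, dotProduct_sub, dotProduct_sub]
    rw [dot_symm Sh⁻¹ hNi u gv]
    ring
  rw [expandL, expandR, e_gg, e_gu, e_uu]
  ring

end LemA

section BlockS

variable {M : ℕ} (g : SDE M) (x : ℕ → ℝ)

lemma stl_symm (hK : g.KMMᵀ = g.KMM) (hS : g.SMᵀ = g.SM) (a b : ℕ) :
    g.Stl x a b = g.Stl x b a := by
  unfold SDE.Stl
  have hKi : (g.KMM⁻¹)ᵀ = g.KMM⁻¹ := inv_symm _ hK
  have hB : (g.KMM⁻¹ * g.SM * g.KMM⁻¹)ᵀ = g.KMM⁻¹ * g.SM * g.KMM⁻¹ := by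
    rw [Matrix.transpose_mul, Matrix.transpose_mul, hKi, hS]
    rw [Matrix.mul_assoc]
  have h1 : ∀ a : Fin M → ℝ, g.KMM⁻¹ *ᵥ (g.SM *ᵥ (g.KMM⁻¹ *ᵥ a))
      = (g.KMM⁻¹ * g.SM * g.KMM⁻¹) *ᵥ a := by
    intro a
    rw [Matrix.mulVec_mulVec, Matrix.mulVec_mulVec]
  have key : ∀ u w : Fin M → ℝ,
      u ⬝ᵥ (g.KMM⁻¹ *ᵥ (g.SM *ᵥ (g.KMM⁻¹ *ᵥ w)))
        = w ⬝ᵥ (g.KMM⁻¹ *ᵥ (g.SM *ᵥ (g.KMM⁻¹ *ᵥ u))) := by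
    intro u w
    rw [h1 w, h1 u]
    exact dot_symm _ hB u w
  rw [key]
  by_cases h : a = b
  · subst h; simp
  · have h' : ¬ b = a := fun hh => h hh.symm
    simp [h, h']

lemma blockS_symm (hsym : ∀ a b, g.Stl x a b = g.Stl x b a) (n : ℕ) :
    (g.blockS x n)ᵀ = g.blockS x n := by
  ext a b
  simp only [Matrix.transpose_apply, SDE.blockS, Matrix.of_apply]
  exact hsym _ _

/-- The bordered-matrix decomposition of `blockS x (n+1)`. -/
lemma blockS_succ (n : ℕ) :
    g.blockS x (n + 1) =
      (fromBlocks (g.blockS x n)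
        (Matrix.of fun (i : Fin n) (_ : Fin 1) => g.Stl x i n)
        (Matrix.of fun (_ : Fin 1) (i : Fin n) => g.Stl x n i)
        (Matrix.of fun (_ _ : Fin 1) => g.Stl x n n)).submatrix
          finSumFinEquiv.symm finSumFinEquiv.symm := by
  ext a b
  rw [Matrix.submatrix_apply]
  have key : ∀ p q : Fin n ⊕ Fin 1,
      (fromBlocks (g.blockS x n)
        (Matrix.of fun (i : Fin n) (_ : Fin 1) => g.Stl x i n)
        (Matrix.of fun (_ : Fin 1) (i : Fin n) => g.Stl x n i)
        (Matrix.of fun (_ _ : Fin 1) => g.Stl x n n)) p q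
        = g.blockS x (n + 1) (finSumFinEquiv p) (finSumFinEquiv q) := by
    rintro (p | p) (q | q) <;>
      simp [fromBlocks, SDE.blockS, finSumFinEquiv_apply_left, finSumFinEquiv_apply_right,
        Fin.coe_castAdd, Fin.coe_natAdd, Fin.val_eq_zero]
  rw [key, Equiv.apply_symm_apply, Equiv.apply_symm_apply]

/-- Lemma B: chain-rule factorization of the multivariate Gaussian built on `blockS`. -/
lemma lemB (hsym : ∀ a b, g.Stl x a b = g.Stl x b a) (n : ℕ)
    (hpd : ∀ s, s ≤ n → (g.blockS x s).PosDef)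
    (hcv : ∀ s, s < n → 0 < g.condVar x s) (v : ℕ → ℝ) :
    (g.blockS x n).det = ∏ s ∈ Finset.range n, g.condVar x s ∧
    ((fun i : Fin n => v i) ⬝ᵥ ((g.blockS x n)⁻¹ *ᵥ fun i : Fin n => v i)
      = ∑ s ∈ Finset.range n,
          (v s - (fun i : Fin s => g.Stl x s i) ⬝ᵥ
            ((g.blockS x s)⁻¹ *ᵥ fun i : Fin s => v i)) ^ 2 / g.condVar x s) := by
  induction n with
  | zero =>
      constructor
      · simp [Matrix.det_fin_zero]
      · simp [dotProduct]
  | succ n ih =>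
      obtain ⟨ihdet, ihquad⟩ := ih (fun s hs => hpd s (Nat.le_succ_of_le hs))
        (fun s hs => hcv s (Nat.lt_succ_of_lt hs))
      set P := g.blockS x n with hP
      set C := (Matrix.of fun (i : Fin n) (_ : Fin 1) => g.Stl x i n) with hC
      set Rm := (Matrix.of fun (_ : Fin 1) (i : Fin n) => g.Stl x n i) with hRm
      set dm := (Matrix.of fun (_ _ : Fin 1) => g.Stl x n n) with hdm
      have hPu : IsUnit P.det := (hpd n (Nat.le_succ n)).det_pos.ne'.isUnit
      have hcvn : 0 < g.condVar x n := hcv n (Nat.lt_succ_self n)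
      have hsv : dm 0 0 - (Rm * P⁻¹ * C) 0 0 = g.condVar x n := by
        rw [entry_mul_mul]
        rfl
      have hCR : C = Rmᵀ := by
        ext i o
        simp only [hC, hRm, Matrix.transpose_apply, Matrix.of_apply]
        exact hsym _ _
      have hPsymm : Pᵀ = P := blockS_symm g x hsym n
      have hdetF : (fromBlocks P C Rm dm).det = P.det * g.condVar x n :=
        bordered_det P C Rm dm hPu hsv
      have hdet : (g.blockS x (n + 1)).det = P.det * g.condVar x n := by
        rw [blockS_succ, Matrix.det_submatrix_equiv_self, hdetF]
      constructor
      · rw [hdet, ihdet, Finset.prod_range_succ]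
      · have hdetFu : IsUnit (fromBlocks P C Rm dm).det := by
          rw [hdetF]
          exact (mul_pos (hpd n (Nat.le_succ n)).det_pos hcvn).ne'.isUnit
        have hinv : (g.blockS x (n + 1))⁻¹
            = ((fromBlocks P C Rm dm)⁻¹).submatrix finSumFinEquiv.symm finSumFinEquiv.symm := by
          rw [blockS_succ, inv_submatrix_equiv _ _ hdetFu]
        rw [hinv]
        rw [Matrix.submatrix_mulVec_equiv]
        simp only [Equiv.symm_symm]
        rw [dot_comp_equiv]
        have hw : ((fun i : Fin (n+1) => v i) ∘ finSumFinEquiv)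
            = Sum.elim (fun i : Fin n => v i) (fun _ : Fin 1 => v n) := by
          funext p
          rcases p with p | p
          · simp [finSumFinEquiv_apply_left]
          · simp [finSumFinEquiv_apply_right, Fin.val_eq_zero]
        rw [hw]
        rw [bordered_quad P C Rm dm hPu hPsymm hCR hcvn.ne' hsv]
        rw [Finset.sum_range_succ, ihquad]
        rfl

section Scalar

lemma gauss_prod {ι : Type*} [Fintype ι] (a b c : ι → ℝ) (hc : ∀ i, 0 < c i) :
    ∏ i, gauss (a i) (b i) (c i)
      = (∏ i, Real.sqrt (2 * Real.pi * c i))⁻¹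
        * Real.exp (-(1 / 2) * ∑ i, (a i - b i) ^ 2 / c i) := by
  unfold gauss
  rw [Finset.prod_mul_distrib, Finset.prod_inv_distrib, ← Real.exp_sum]
  congr 1
  rw [Finset.mul_sum]
  apply congrArg
  apply Finset.sum_congr rfl
  intro i _
  have h := (hc i).ne'
  field_simp

lemma sqrt_prod {ι : Type*} [Fintype ι] (c : ι → ℝ) (hc : ∀ i, 0 ≤ c i) :
    ∏ i, Real.sqrt (c i) = Real.sqrt (∏ i, c i) := by
  classical
  have : ∀ s : Finset ι, ∏ i ∈ s, Real.sqrt (c i) = Real.sqrt (∏ i ∈ s, c i) := by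
    intro s
    induction s using Finset.induction with
    | empty => simp
    | insert a s hni ih =>
        rw [Finset.prod_insert hni, Finset.prod_insert hni, ih,
          Real.sqrt_mul (hc a)]
  exact this Finset.univ

lemma diag_inv {ι : Type*} [Fintype ι] [DecidableEq ι] (v : ι → ℝ) (hv : ∀ i, v i ≠ 0) :
    (Matrix.diagonal v)⁻¹ = Matrix.diagonal (fun i => (v i)⁻¹) := by
  apply Matrix.inv_eq_right_inv
  rw [Matrix.diagonal_mul_diagonal]
  rw [show (fun i => v i * (v i)⁻¹) = fun _ => (1 : ℝ) by
    funext i; exact mul_inv_cancel₀ (hv i)]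
  exact Matrix.diagonal_one

lemma diag_quad {ι : Type*} [Fintype ι] [DecidableEq ι] (v : ι → ℝ) (hv : ∀ i, v i ≠ 0)
    (w : ι → ℝ) :
    w ⬝ᵥ ((Matrix.diagonal v)⁻¹ *ᵥ w) = ∑ i, (w i) ^ 2 / v i := by
  rw [diag_inv v hv]
  unfold dotProduct
  apply Finset.sum_congr rfl
  intro i _
  rw [Matrix.mulVec_diagonal]
  have := hv i
  field_simp

lemma combine_exp (Na Nb Nc Nd Q1 Q2 S1 S2 : ℝ) (hN : Na * Nb = Nc * Nd)
    (hQ : Q1 + S1 = Q2 + S2) :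
    Na⁻¹ * Real.exp (-(1 / 2) * Q1) * (Nb⁻¹ * Real.exp (-(1 / 2) * S1))
      = Nc⁻¹ * Real.exp (-(1 / 2) * Q2) * (Nd⁻¹ * Real.exp (-(1 / 2) * S2)) := by
  rw [show Na⁻¹ * Real.exp (-(1 / 2) * Q1) * (Nb⁻¹ * Real.exp (-(1 / 2) * S1))
      = (Na * Nb)⁻¹ * (Real.exp (-(1 / 2) * Q1) * Real.exp (-(1 / 2) * S1)) by ring,
    ← Real.exp_add, show -(1 / 2) * Q1 + -(1 / 2) * S1 = -(1 / 2) * (Q1 + S1) by ring,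
    hN, hQ,
    show -(1 / 2) * (Q2 + S2) = -(1 / 2) * Q2 + -(1 / 2) * S2 by ring, Real.exp_add]
  ring

end Scalar

end BlockS
end SDEAux

/-- **Lemma S2** (factorized form of the joint variational density, SDE formulation).
For every `j ∈ {1, …, J}`, all states `x_0, …, x_j` and every `f_M`,
`q^Δ(f_M) ∏_{j'=0}^{j-1} p^Δ(x_{j'+1}|x_{j'},f_M)
  = q^Δ(f_M|x_j,…,x_0) ∏_{j'=1}^{j} q^Δ(x_{j'}|x_{j'-1},…,x_0)`,
where `q^Δ(f_M|x_j,…,x_0) = N_M(f_M | μ̂^j_M, Σ̂^j_M)`. -/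
theorem sde_joint_variational_density_factorization
    {M J : ℕ} (g : SDE M)
    (hdt : 0 < g.dt) (hR : 1 ≤ g.R) (hQ : 0 < g.Q)
    (hKMM : g.KMM.PosDef) (hSM : g.SM.PosDef)
    (htrans : ∀ x : ℝ, 0 < g.transVar x)
    (hblock : ∀ (x : ℕ → ℝ) (s : ℕ), s ≤ J → (g.blockS x s).PosDef)
    (hcondVar : ∀ (x : ℕ → ℝ) (s : ℕ), s < J → 0 < g.condVar x s)
    (hpost : ∀ (x : ℕ → ℝ) (j : ℕ), j ≤ J → (g.SigHatM x j).PosDef)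
    (j : ℕ) (hj1 : 1 ≤ j) (hjJ : j ≤ J) (x : ℕ → ℝ) (f : Fin M → ℝ) :
    gaussM f g.mM g.SM * ∏ j' ∈ Finset.range j, g.trans (x (j' + 1)) (x j') f
      = gaussM f (g.muHatM x j) (g.SigHatM x j) *
          ∏ j' ∈ Finset.range j, gauss (x (j' + 1)) (g.condMean x j') (g.condVar x j') := by
  classical
  have h2π : (0 : ℝ) < 2 * Real.pi := by positivity
  have hKsym : g.KMMᵀ = g.KMM := by
    rw [← Matrix.conjTranspose_eq_transpose_of_trivial]; exact hKMM.1
  have hSsym : g.SMᵀ = g.SM := by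
    rw [← Matrix.conjTranspose_eq_transpose_of_trivial]; exact hSM.1
  have hKu : IsUnit g.KMM.det := hKMM.det_pos.ne'.isUnit
  have hSu : IsUnit g.SM.det := hSM.det_pos.ne'.isUnit
  have hTu : IsUnit (g.blockS x j).det := (hblock x j hjJ).det_pos.ne'.isUnit
  have hKisym := SDEAux.inv_symm g.KMM hKsym
  set A : Matrix (Fin j) (Fin M) ℝ := g.rho • (g.Pmat x j * g.KMM⁻¹) with hA
  set D : Matrix (Fin j) (Fin j) ℝ :=
    Matrix.diagonal (fun i : Fin j => g.transVar (x i)) with hDdef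
  have hvpos : ∀ i : Fin j, 0 < g.transVar (x (i : ℕ)) := fun i => htrans _
  have hcv : ∀ i : Fin j, 0 < g.condVar x (i : ℕ) :=
    fun i => hcondVar x i (lt_of_lt_of_le i.isLt hjJ)
  have hDdet : D.det = ∏ i : Fin j, g.transVar (x i) := Matrix.det_diagonal
  have hDpos : 0 < D.det := by
    rw [hDdet]; exact Finset.prod_pos fun i _ => hvpos i
  have hDu : IsUnit D.det := hDpos.ne'.isUnit
  have hDsym : Dᵀ = D := Matrix.diagonal_transpose _
  have hAt : Aᵀ = g.rho • (g.KMM⁻¹ * (g.Pmat x j)ᵀ) := by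
    rw [hA, Matrix.transpose_smul, Matrix.transpose_mul, hKisym]
  have hBv : ∀ a : Fin M → ℝ, g.KMM⁻¹ *ᵥ (g.SM *ᵥ (g.KMM⁻¹ *ᵥ a))
      = (g.KMM⁻¹ * g.SM * g.KMM⁻¹) *ᵥ a := by
    intro a; rw [Matrix.mulVec_mulVec, Matrix.mulVec_mulVec]
  have hASA : A * g.SM * Aᵀ
      = (g.rho ^ 2) • (g.Pmat x j * (g.KMM⁻¹ * g.SM * g.KMM⁻¹) * (g.Pmat x j)ᵀ) := by
    rw [hA, hAt]
    simp only [Matrix.smul_mul, Matrix.mul_smul, smul_smul, Matrix.mul_assoc, pow_two]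
  have hTeq : g.blockS x j = A * g.SM * Aᵀ + D := by
    rw [hASA]
    ext a b
    have hdot : g.KxM (x a) ⬝ᵥ (g.KMM⁻¹ *ᵥ (g.SM *ᵥ (g.KMM⁻¹ *ᵥ g.KxM (x b))))
        = (g.Pmat x j * (g.KMM⁻¹ * g.SM * g.KMM⁻¹) * (g.Pmat x j)ᵀ) a b := by
      rw [hBv]
      exact SDEAux.dot_mulVec_entry (g.Pmat x j) _ a b
    simp only [SDE.blockS, SDE.Stl, Matrix.of_apply, Matrix.add_apply, Matrix.smul_apply,
      smul_eq_mul, hdot, hDdef, Matrix.diagonal_apply]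
    by_cases h : a = b
    · subst h; simp
    · have h' : ¬((a : ℕ) = (b : ℕ)) := fun hh => h (Fin.val_injective hh)
      simp [h, h']
  have hAv : ∀ (w : Fin M → ℝ) (i : Fin j),
      (A *ᵥ w) i = g.rho * (g.KxM (x i) ⬝ᵥ (g.KMM⁻¹ *ᵥ w)) := by
    intro w i
    rw [hA, Matrix.smul_mulVec, Pi.smul_apply, smul_eq_mul, ← Matrix.mulVec_mulVec]
    rfl
  have hsym : ∀ a b, g.Stl x a b = g.Stl x b a := fun a b => SDEAux.stl_symm g x hKsym hSsym a b
  set v : ℕ → ℝ := fun s => x (s + 1) - g.muT (x s) with hv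
  obtain ⟨hdetB, hquadB⟩ := SDEAux.lemB g x hsym j
    (fun s hs => hblock x s (le_trans hs hjJ))
    (fun s hs => hcondVar x s (lt_of_lt_of_le hs hjJ)) v
  have hSigeq : g.SigHatM x j = g.SM - g.SM * Aᵀ * (g.blockS x j)⁻¹ * (A * g.SM) := by
    unfold SDE.SigHatM
    rw [hA, hAt]
    simp only [Matrix.smul_mul, Matrix.mul_smul, smul_smul, Matrix.mul_assoc, pow_two]
  have hmueq : g.muHatM x j = g.mM + (g.SM * Aᵀ * (g.blockS x j)⁻¹) *ᵥ (g.resid x j) := by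
    unfold SDE.muHatM
    rw [hAt]
    simp only [Matrix.mul_smul, Matrix.smul_mul, Matrix.smul_mulVec,
      Matrix.mulVec_mulVec, Matrix.mul_assoc]
  have htrans_i : ∀ i : Fin j, g.trans (x ((i : ℕ) + 1)) (x i) f
      = gauss (x ((i : ℕ) + 1)) (x i + (A *ᵥ f) i) (g.transVar (x i)) := by
    intro i
    unfold SDE.trans
    rw [hAv f i]
  -- convert range products to Fin products
  rw [show (∏ j' ∈ Finset.range j, g.trans (x (j' + 1)) (x j') f)
      = ∏ i : Fin j, g.trans (x ((i : ℕ) + 1)) (x i) f from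
    (Fin.prod_univ_eq_prod_range (fun j' => g.trans (x (j' + 1)) (x j') f) j).symm]
  rw [show (∏ j' ∈ Finset.range j, gauss (x (j' + 1)) (g.condMean x j') (g.condVar x j'))
      = ∏ i : Fin j, gauss (x ((i : ℕ) + 1)) (g.condMean x i) (g.condVar x i) from
    (Fin.prod_univ_eq_prod_range (fun j' => gauss (x (j' + 1)) (g.condMean x j') (g.condVar x j')) j).symm]
  rw [Finset.prod_congr rfl (fun i _ => htrans_i i)]
  rw [SDEAux.gauss_prod (fun i : Fin j => x ((i : ℕ) + 1))
    (fun i : Fin j => x i + (A *ᵥ f) i) (fun i : Fin j => g.transVar (x i)) hvpos]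
  rw [SDEAux.gauss_prod (fun i : Fin j => x ((i : ℕ) + 1))
    (fun i : Fin j => g.condMean x i) (fun i : Fin j => g.condVar x i) hcv]
  simp only [gaussM]
  apply SDEAux.combine_exp
  · -- normalizers
    rw [SDEAux.sqrt_prod _ (fun i => (mul_pos h2π (hvpos i)).le),
      SDEAux.sqrt_prod _ (fun i => (mul_pos h2π (hcv i)).le)]
    rw [← Real.sqrt_mul (mul_nonneg (pow_nonneg h2π.le M) hSM.det_pos.le)]
    rw [← Real.sqrt_mul (mul_nonneg (pow_nonneg h2π.le M) (hpost x j hjJ).det_pos.le)]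
    congr 1
    have hconst : (∏ _i : Fin j, (2 * Real.pi)) = (2 * Real.pi) ^ j := by
      rw [Finset.prod_const, Finset.card_univ, Fintype.card_fin]
    have hL : (∏ i : Fin j, (2 * Real.pi * g.transVar (x (i : ℕ))))
        = (2 * Real.pi) ^ j * ∏ i : Fin j, g.transVar (x (i : ℕ)) := by
      rw [← hconst, ← Finset.prod_mul_distrib]
    have hRp : (∏ i : Fin j, (2 * Real.pi * g.condVar x (i : ℕ)))
        = (2 * Real.pi) ^ j * ∏ i : Fin j, g.condVar x (i : ℕ) := by
      rw [← hconst, ← Finset.prod_mul_distrib]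
    rw [hL, hRp]
    have hdetid : g.SM.det * (∏ i : Fin j, g.transVar (x i))
        = (g.SigHatM x j).det * (∏ i : Fin j, g.condVar x (i : ℕ)) := by
      have hw := SDEAux.wood_det g.SM A D hSu (by rw [← hTeq]; exact hTu)
      rw [← hTeq] at hw
      rw [← hDdet, hw, hSigeq]
      congr 1
      rw [hdetB, ← Fin.prod_univ_eq_prod_range]
    linear_combination ((2 * Real.pi) ^ M * (2 * Real.pi) ^ j) * hdetid
  · -- exponents
    have hTuA : IsUnit (A * g.SM * Aᵀ + D).det := by rw [← hTeq]; exact hTu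
    have hquadA := SDEAux.lemA_quad g.SM A D hSu hDu hTuA hSsym hDsym (f - g.mM) (g.resid x j)
    rw [← hTeq] at hquadA
    have hr_eq : ∀ i : Fin j, (g.resid x j - A *ᵥ (f - g.mM)) i
        = x ((i : ℕ) + 1) - (x i + (A *ᵥ f) i) := by
      intro i
      simp only [Pi.sub_apply, Matrix.mulVec_sub, SDE.resid, SDE.muT]
      rw [hAv f i, hAv g.mM i]
      ring
    have hQL : (∑ i : Fin j, (x ((i : ℕ) + 1) - (x i + (A *ᵥ f) i)) ^ 2 / g.transVar (x i))
        = (g.resid x j - A *ᵥ (f - g.mM)) ⬝ᵥ (D⁻¹ *ᵥ (g.resid x j - A *ᵥ (f - g.mM))) := by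
      rw [hDdef, SDEAux.diag_quad _ (fun i => (hvpos i).ne')]
      exact Finset.sum_congr rfl fun i _ => by rw [hr_eq i]
    have hcm : ∀ s : ℕ, x (s + 1) - g.condMean x s
        = v s - ((fun i : Fin s => g.Stl x s (i : ℕ)) ⬝ᵥ
            ((g.blockS x s)⁻¹ *ᵥ fun i : Fin s => v (i : ℕ))) := by
      intro s
      simp only [SDE.condMean, hv]
      ring
    have hrv : g.resid x j = fun i : Fin j => v (i : ℕ) := rfl
    have hQR : (∑ i : Fin j, (x ((i : ℕ) + 1) - g.condMean x i) ^ 2 / g.condVar x (i : ℕ))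
        = g.resid x j ⬝ᵥ ((g.blockS x j)⁻¹ *ᵥ g.resid x j) := by
      rw [hrv, hquadB, ← Fin.sum_univ_eq_sum_range]
      apply Finset.sum_congr rfl
      intro i _
      rw [hcm]
    have hfmu : f - g.muHatM x j
        = (f - g.mM) - (g.SM * Aᵀ * (g.blockS x j)⁻¹) *ᵥ (g.resid x j) := by
      rw [hmueq, sub_add_eq_sub_sub]
    rw [hQL, hQR, hfmu, hSigeq]
    exact hquadA
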